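/- For all d ≥ 1, α > 1, positive weights γ with γ_∅ = 1, and M ≥ 1, the truncation tail satisfies Σ_{h∈ℤ^d, h∉A_d(M)} 1/r_{d,α,γ}(h) ≤ C_{2,d,τ,α,γ} · M^{−(1−τ)/(ατ)} for every τ ∈ (1/α, 1), where C_{2,d,τ,α,γ} = γ_{{1}}^{(τ−1)/(ατ)} · (τ/(1−τ)) · (Σ_{u⊆{1,…,d}} γ_u^τ [2ζ(ατ)]^{|u|})^{1/τ}. -/

import Mathlib

open Finset

noncomputable section

/-- `zetaR x = Σ_{h ≥ 1} h^{-x}`, the Riemann zeta function on reals. -/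
def zetaR (x : ℝ) : ℝ := ∑' n : ℕ+, (n : ℝ) ^ (-x)

/-- `Un n = {z ∈ ℤ : 1 ≤ z ≤ n-1, gcd(z,n) = 1}`. -/
def Un (n : ℕ) : Finset ℕ := (Finset.range n).filter fun z => 1 ≤ z ∧ Nat.gcd z n = 1

/-- The support of an integer vector. -/
def supp {k : ℕ} (h : Fin k → ℤ) : Finset (Fin k) := Finset.univ.filter fun j => h j ≠ 0

/-- `r'(h) = ∏_{j ∈ supp h} |h_j|^α`. -/
def rp {k : ℕ} (α : ℝ) (h : Fin k → ℤ) : ℝ := ∏ j ∈ supp h, |(h j : ℝ)| ^ α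

/-- `r_{d,α,γ}(h) = (1/γ_{supp h}) ∏_{j ∈ supp h} |h_j|^α`. -/
def rK {k : ℕ} (α : ℝ) (γ : Finset (Fin k) → ℝ) (h : Fin k → ℤ) : ℝ := rp α h / γ (supp h)

/-- `ℓ · z ≡ 0 (mod n)`. -/
def dotMod (n : ℕ) {k : ℕ} (ℓ : Fin k → ℤ) (z : Fin k → ℕ) : Prop :=
  (n : ℤ) ∣ ∑ j, ℓ j * (z j : ℤ)

/-- The search criterion `S_{n,d,α,γ}(z)`. -/
def Sq (n : ℕ) {k : ℕ} (α : ℝ) (γ : Finset (Fin k) → ℝ) (z : Fin k → ℕ) : ℝ :=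
  ∑' h : Fin k → ℤ, (1 / rK α γ h) *
    ∑' ℓ : {ℓ : Fin k → ℤ // ℓ ≠ 0 ∧ dotMod n ℓ z}, 1 / rK α γ (h + ℓ.1)

/-- `θ_{n,s+1,α}(z; β)`. -/
def theta (n : ℕ) (α : ℝ) {s : ℕ} (z : Fin (s+1) → ℕ) (β : Finset (Fin (s+1)) → ℝ) : ℝ :=
  ∑' h : Fin (s+1) → ℤ,
    ∑' ℓ : {ℓ : Fin (s+1) → ℤ // ℓ (Fin.last s) ≠ 0 ∧ dotMod n ℓ z},
      (β (supp h) / rp α h) * (β (supp (h + ℓ.1)) / rp α (h + ℓ.1))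

/-- `T_{n,d,s+1,α,γ}(z_1,…,z_{s+1})`. -/
def Tcrit (n : ℕ) {d : ℕ} (α : ℝ) (γ : Finset (Fin d) → ℝ) (s : ℕ) (hs : s + 1 ≤ d)
    (z : Fin (s+1) → ℕ) : ℝ :=
  ∑ w ∈ (Finset.univ.filter fun j : Fin d => s + 1 ≤ (j : ℕ)).powerset,
    (2 * zetaR (2*α)) ^ w.card *
      theta n α z (fun u => γ (u.map ⟨Fin.castLE hs, Fin.castLE_injective hs⟩ ∪ w))

/-- `z` is obtained by the component-by-component construction. -/
def IsCBC (n : ℕ) {d : ℕ} (α : ℝ) (γ : Finset (Fin d) → ℝ) (z : Fin d → ℕ) : Prop :=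
  (∀ j, z j ∈ Un n) ∧
  ∀ (s : ℕ) (hs : s + 1 ≤ d), ∀ w ∈ Un n,
    Tcrit n α γ s hs (fun j => z (Fin.castLE hs j)) ≤
      Tcrit n α γ s hs (Fin.snoc (fun j : Fin s => z (Fin.castLE (Nat.le_of_succ_le hs) j)) w)

lemma zetaR_nonneg (x : ℝ) : 0 ≤ zetaR x :=
  tsum_nonneg fun _ => Real.rpow_nonneg (by positivity) _

lemma zetaR_eq_nat (x : ℝ) (hx : 0 < x) : zetaR x = ∑' n : ℕ, (n : ℝ) ^ (-x) := by
  refine Function.Injective.tsum_eq (f := fun n : ℕ => (n : ℝ) ^ (-x))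
    (g := fun n : ℕ+ => (n : ℕ)) (fun a b hab => PNat.coe_injective hab) ?_
  intro n hn
  rcases Nat.eq_zero_or_pos n with h0 | h0
  · exfalso
    apply hn
    simp [h0, Real.zero_rpow (by linarith : -x ≠ 0)]
  · exact ⟨⟨n, h0⟩, rfl⟩

lemma summable_nat_neg (x : ℝ) (hx : 1 < x) : Summable (fun n : ℕ => (n : ℝ) ^ (-x)) :=
  Real.summable_nat_rpow.mpr (by linarith)

lemma sum_nat_le_zetaR {x : ℝ} (hx : 1 < x) (G : Finset ℕ) :
    ∑ n ∈ G, (n : ℝ) ^ (-x) ≤ zetaR x := by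
  rw [zetaR_eq_nat x (by linarith)]
  exact (summable_nat_neg x hx).sum_le_tsum G (fun n _ => Real.rpow_nonneg (Nat.cast_nonneg n) _)

lemma sum_int_le {x : ℝ} (hx : 1 < x) (F : Finset ℤ) :
    ∑ z ∈ F, |(z : ℝ)| ^ (-x) ≤ 2 * zetaR x := by
  classical
  have habs : ∀ z : ℤ, |(z : ℝ)| = ((z.natAbs : ℕ) : ℝ) := by
    intro z
    rw [Nat.cast_natAbs, Int.cast_abs]
  calc ∑ z ∈ F, |(z : ℝ)| ^ (-x)
      = ∑ n ∈ F.image Int.natAbs, ∑ z ∈ F.filter (fun z => z.natAbs = n),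
          |(z : ℝ)| ^ (-x) :=
        (Finset.sum_fiberwise_of_maps_to (fun z hz => Finset.mem_image_of_mem _ hz) _).symm
    _ ≤ ∑ n ∈ F.image Int.natAbs, 2 * (n : ℝ) ^ (-x) := by
        apply Finset.sum_le_sum
        intro n _
        have hsub : F.filter (fun z => z.natAbs = n) ⊆ ({(n : ℤ), -(n : ℤ)} : Finset ℤ) := by
          intro z hz
          simp only [Finset.mem_filter] at hz
          rcases Int.natAbs_eq_iff.mp hz.2 with h | h <;> simp [h]
        calc ∑ z ∈ F.filter (fun z => z.natAbs = n), |(z : ℝ)| ^ (-x)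
            = ∑ z ∈ F.filter (fun z => z.natAbs = n), (n : ℝ) ^ (-x) := by
              apply Finset.sum_congr rfl
              intro z hz
              simp only [Finset.mem_filter] at hz
              rw [habs z, hz.2]
          _ = (F.filter (fun z => z.natAbs = n)).card * (n : ℝ) ^ (-x) := by
              rw [Finset.sum_const, nsmul_eq_mul]
          _ ≤ 2 * (n : ℝ) ^ (-x) := by
              apply mul_le_mul_of_nonneg_right _ (Real.rpow_nonneg (Nat.cast_nonneg n) _)
              have := Finset.card_le_card hsub
              have h2 : ({(n : ℤ), -(n : ℤ)} : Finset ℤ).card ≤ 2 :=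
                le_trans (Finset.card_insert_le _ _) (by simp)
              exact_mod_cast le_trans this h2
    _ = 2 * ∑ n ∈ F.image Int.natAbs, (n : ℝ) ^ (-x) := by rw [Finset.mul_sum]
    _ ≤ 2 * zetaR x := by
        apply mul_le_mul_of_nonneg_left (sum_nat_le_zetaR hx _) (by norm_num)

lemma abs_one_le {k : ℕ} (h : Fin k → ℤ) {j : Fin k} (hj : j ∈ supp h) :
    (1 : ℝ) ≤ |(h j : ℝ)| := by
  have hne : h j ≠ 0 := by simpa [supp] using hj
  have := Int.one_le_abs hne
  calc (1 : ℝ) = ((1 : ℤ) : ℝ) := by norm_num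
    _ ≤ ((|h j| : ℤ) : ℝ) := by exact_mod_cast this
    _ = |(h j : ℝ)| := by push_cast; ring

lemma rp_pos {k : ℕ} (α : ℝ) (h : Fin k → ℤ) : 0 < rp α h := by
  apply Finset.prod_pos
  intro j hj
  exact Real.rpow_pos_of_pos (lt_of_lt_of_le one_pos (abs_one_le h hj)) _

lemma rK_pos {k : ℕ} (α : ℝ) (γ : Finset (Fin k) → ℝ) (hγpos : ∀ u, 0 < γ u)
    (h : Fin k → ℤ) : 0 < rK α γ h :=
  div_pos (rp_pos α h) (hγpos _)

lemma single_le_rp {k : ℕ} {α : ℝ} (hα : 0 ≤ α) (h : Fin k → ℤ) {j : Fin k}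
    (hj : j ∈ supp h) : |(h j : ℝ)| ^ α ≤ rp α h := by
  show |(h j : ℝ)| ^ α ≤ ∏ i ∈ supp h, |(h i : ℝ)| ^ α
  rw [← Finset.mul_prod_erase _ _ hj]
  apply le_mul_of_one_le_right (Real.rpow_nonneg (abs_nonneg _) _)
  calc (1 : ℝ) = ∏ _i ∈ (supp h).erase j, (1 : ℝ) := by simp
    _ ≤ ∏ i ∈ (supp h).erase j, |(h i : ℝ)| ^ α := by
        apply Finset.prod_le_prod (by intros; norm_num)
        intro i hi
        calc (1 : ℝ) = |(h i : ℝ)| ^ (0 : ℝ) := by rw [Real.rpow_zero]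
          _ ≤ |(h i : ℝ)| ^ α :=
            Real.rpow_le_rpow_of_exponent_le (abs_one_le h (Finset.mem_of_mem_erase hi)) hα

lemma rK_rpow_neg {k : ℕ} {α τ : ℝ} (hα : 0 < α) (hτ : 0 < τ)
    (γ : Finset (Fin k) → ℝ) (hγpos : ∀ u, 0 < γ u) (h : Fin k → ℤ) :
    (rK α γ h) ^ (-τ) = γ (supp h) ^ τ * ∏ j ∈ supp h, |(h j : ℝ)| ^ (-(α * τ)) := by
  have hrp : (0:ℝ) < rp α h := rp_pos α h
  have hγ : (0:ℝ) < γ (supp h) := hγpos _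
  rw [rK, Real.div_rpow hrp.le hγ.le, Real.rpow_neg hγ.le, div_eq_mul_inv, inv_inv,
    mul_comm ((rp α h) ^ (-τ)) _]
  congr 1
  show (∏ j ∈ supp h, |(h j : ℝ)| ^ α) ^ (-τ) = _
  rw [← Real.finset_prod_rpow _ _ (fun i _ => Real.rpow_nonneg (abs_nonneg _) _) (-τ)]
  apply Finset.prod_congr rfl
  intro j _
  rw [← Real.rpow_mul (abs_nonneg _), mul_neg]

lemma sum_prod_le {d : ℕ} {x : ℝ} (hx : 1 < x) (u : Finset (Fin d))
    (F : Finset (Fin d → ℤ)) (hF : ∀ h ∈ F, supp h = u) :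
    ∑ h ∈ F, ∏ j ∈ u, |(h j : ℝ)| ^ (-x) ≤ (2 * zetaR x) ^ u.card := by
  classical
  set G : ∀ j : Fin d, Finset ℤ := fun j => ((F.image (fun h => h j)).erase 0) with hG
  set ψ : (Fin d → ℤ) → (∀ a : Fin d, a ∈ u → ℤ) := fun h => fun a _ => h a with hψ
  have hinj : ∀ h1 ∈ F, ∀ h2 ∈ F, ψ h1 = ψ h2 → h1 = h2 := by
    intro h1 m1 h2 m2 heq
    funext j
    by_cases hj : j ∈ u
    · exact congrFun (congrFun heq j) hj
    · have e1 : h1 j = 0 := by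
        have := hF h1 m1; rw [← this] at hj; simpa [supp] using hj
      have e2 : h2 j = 0 := by
        have := hF h2 m2; rw [← this] at hj; simpa [supp] using hj
      rw [e1, e2]
  have him : F.image ψ ⊆ u.pi G := by
    intro p hp
    rcases Finset.mem_image.mp hp with ⟨h, hh, rfl⟩
    rw [Finset.mem_pi]
    intro a ha
    apply Finset.mem_erase.mpr
    constructor
    · have : a ∈ supp h := by rw [hF h hh]; exact ha
      simpa [supp] using this
    · exact Finset.mem_image_of_mem _ hh
  calc ∑ h ∈ F, ∏ j ∈ u, |(h j : ℝ)| ^ (-x)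
      = ∑ p ∈ F.image ψ, ∏ j ∈ u.attach, |((p j.1 j.2 : ℤ) : ℝ)| ^ (-x) := by
        rw [Finset.sum_image hinj]
        apply Finset.sum_congr rfl
        intro h _
        exact (Finset.prod_attach u (fun j => |(h j : ℝ)| ^ (-x))).symm
    _ ≤ ∑ p ∈ u.pi G, ∏ j ∈ u.attach, |((p j.1 j.2 : ℤ) : ℝ)| ^ (-x) := by
        apply Finset.sum_le_sum_of_subset_of_nonneg him
        intro p _ _
        exact Finset.prod_nonneg fun j _ => Real.rpow_nonneg (abs_nonneg _) _
    _ = ∏ j ∈ u, ∑ z ∈ G j, |(z : ℝ)| ^ (-x) :=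
        (Finset.prod_sum u G (fun j z => |(z : ℝ)| ^ (-x))).symm
    _ ≤ ∏ j ∈ u, (2 * zetaR x) := by
        apply Finset.prod_le_prod
        · intro j _
          exact Finset.sum_nonneg fun z _ => Real.rpow_nonneg (abs_nonneg _) _
        · intro j _
          exact sum_int_le hx (G j)
    _ = (2 * zetaR x) ^ u.card := Finset.prod_const _

lemma sum_rK_le {d : ℕ} {α τ : ℝ} (hα : 0 < α) (hτ : 0 < τ) (hp : 1 < α * τ)
    (γ : Finset (Fin d) → ℝ) (hγpos : ∀ u, 0 < γ u)
    (F : Finset (Fin d → ℤ)) :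
    ∑ h ∈ F, (rK α γ h) ^ (-τ) ≤
      ∑ u : Finset (Fin d), γ u ^ τ * (2 * zetaR (α * τ)) ^ u.card := by
  classical
  rw [← Finset.sum_fiberwise F (fun h => supp h) (fun h => (rK α γ h) ^ (-τ))]
  apply Finset.sum_le_sum
  intro u _
  calc ∑ h ∈ F.filter (fun h => supp h = u), (rK α γ h) ^ (-τ)
      = ∑ h ∈ F.filter (fun h => supp h = u), γ u ^ τ * ∏ j ∈ u, |(h j : ℝ)| ^ (-(α * τ)) := by
        apply Finset.sum_congr rfl
        intro h hh
        have hsupp : supp h = u := (Finset.mem_filter.mp hh).2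
        rw [rK_rpow_neg hα hτ γ hγpos h, hsupp]
    _ = γ u ^ τ * ∑ h ∈ F.filter (fun h => supp h = u), ∏ j ∈ u, |(h j : ℝ)| ^ (-(α * τ)) := by
        rw [Finset.mul_sum]
    _ ≤ γ u ^ τ * (2 * zetaR (α * τ)) ^ u.card := by
        apply mul_le_mul_of_nonneg_left _ (Real.rpow_nonneg (hγpos u).le _)
        have : ∀ h ∈ F.filter (fun h => supp h = u), supp h = u :=
          fun h hh => (Finset.mem_filter.mp hh).2
        have := sum_prod_le hp u _ this
        simpa [neg_neg] using this

lemma card_markov {d : ℕ} {α τ : ℝ} (hα : 0 < α) (hτ : 0 < τ) (hp : 1 < α * τ)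
    (γ : Finset (Fin d) → ℝ) (hγpos : ∀ u, 0 < γ u)
    {y : ℝ} (hy : 0 ≤ y) (F : Finset (Fin d → ℤ)) (hF : ∀ h ∈ F, rK α γ h ≤ y) :
    (F.card : ℝ) ≤ y ^ τ * ∑ u : Finset (Fin d), γ u ^ τ * (2 * zetaR (α * τ)) ^ u.card := by
  calc (F.card : ℝ) = ∑ _h ∈ F, (1 : ℝ) := by simp
    _ ≤ ∑ h ∈ F, y ^ τ * (rK α γ h) ^ (-τ) := by
        apply Finset.sum_le_sum
        intro h hh
        have hr : 0 < rK α γ h := rK_pos α γ hγpos h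
        have h1 : (1 : ℝ) ≤ y / rK α γ h := (one_le_div hr).mpr (hF h hh)
        calc (1 : ℝ) = 1 ^ τ := (Real.one_rpow τ).symm
          _ ≤ (y / rK α γ h) ^ τ := Real.rpow_le_rpow (by norm_num) h1 hτ.le
          _ = y ^ τ * (rK α γ h) ^ (-τ) := by
              rw [Real.div_rpow (by positivity) hr.le, Real.rpow_neg hr.le, div_eq_mul_inv]
    _ = y ^ τ * ∑ h ∈ F, (rK α γ h) ^ (-τ) := by rw [Finset.mul_sum]
    _ ≤ y ^ τ * ∑ u : Finset (Fin d), γ u ^ τ * (2 * zetaR (α * τ)) ^ u.card := by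
        exact mul_le_mul_of_nonneg_left (sum_rK_le hα hτ hp γ hγpos F)
          (Real.rpow_nonneg hy _)

lemma finite_le {d : ℕ} {α : ℝ} (hα : 0 < α)
    (γ : Finset (Fin d) → ℝ) (hγpos : ∀ u, 0 < γ u) (y : ℝ) :
    {h : Fin d → ℤ | rK α γ h ≤ y}.Finite := by
  classical
  set Γ : ℝ := ∑ u : Finset (Fin d), γ u with hΓdef
  have hΓ : ∀ u, γ u ≤ Γ :=
    fun u => Finset.single_le_sum (fun v _ => (hγpos v).le) (Finset.mem_univ u)
  have hΓ0 : (0:ℝ) ≤ Γ := Finset.sum_nonneg fun u _ => (hγpos u).le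
  have hmax : (0:ℝ) ≤ max y 0 * Γ := mul_nonneg (le_max_right y 0) hΓ0
  set C : ℤ := ⌈(max y 0 * Γ) ^ α⁻¹⌉ with hC
  apply Set.Finite.subset (Set.Finite.pi (fun _j : Fin d => Set.finite_Icc (-C) C))
  intro h hh
  simp only [Set.mem_pi, Set.mem_univ, forall_true_left, Set.mem_Icc]
  intro j
  rw [← abs_le]
  by_cases hj : h j = 0
  · rw [hj]
    simp only [abs_zero]
    have : (0:ℝ) ≤ (max y 0 * Γ) ^ α⁻¹ := Real.rpow_nonneg hmax _
    exact_mod_cast le_trans this (Int.le_ceil _)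
  · have hjs : j ∈ supp h := by simp [supp, hj]
    have h1 : |(h j : ℝ)| ^ α ≤ rp α h := single_le_rp hα.le h hjs
    have h2 : rp α h ≤ y * γ (supp h) := by
      have := hh
      simp only [Set.mem_setOf_eq, rK] at this
      exact (div_le_iff₀ (hγpos _)).mp this
    have h3 : rp α h ≤ max y 0 * Γ := by
      apply le_trans h2
      apply mul_le_mul (le_max_left y 0) (hΓ _) (hγpos _).le (le_max_right y 0)
    have h4 : |(h j : ℝ)| ≤ (max y 0 * Γ) ^ α⁻¹ := by
      have habs1 : (1:ℝ) ≤ |(h j : ℝ)| := abs_one_le h hjs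
      calc |(h j : ℝ)| = (|(h j : ℝ)| ^ α) ^ α⁻¹ := by
            rw [← Real.rpow_mul (abs_nonneg _), mul_inv_cancel₀ (ne_of_gt hα), Real.rpow_one]
        _ ≤ (max y 0 * Γ) ^ α⁻¹ := by
            apply Real.rpow_le_rpow (by positivity) (le_trans h1 h3) (by positivity)
    have : |(h j : ℝ)| ≤ (C : ℝ) := le_trans h4 (Int.le_ceil _)
    rw [← Int.cast_abs] at this
    exact_mod_cast this

lemma mvt_step {q : ℝ} (hq : 1 < q) (n : ℕ) (hn : 1 ≤ n) :
    ((n : ℝ) + 1) ^ (-q) ≤ ((n : ℝ) ^ (1 - q) - ((n : ℝ) + 1) ^ (1 - q)) / (q - 1) := by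
  have hn0 : (0 : ℝ) < n := by exact_mod_cast hn
  have hab : (n : ℝ) < (n : ℝ) + 1 := lt_add_one _
  have hcont : ContinuousOn (fun y : ℝ => y ^ (1 - q)) (Set.Icc (n : ℝ) ((n : ℝ) + 1)) := by
    apply ContinuousOn.rpow_const continuousOn_id
    intro y hy
    exact Or.inl (ne_of_gt (lt_of_lt_of_le hn0 hy.1))
  have hderiv : ∀ y ∈ Set.Ioo (n : ℝ) ((n : ℝ) + 1),
      HasDerivAt (fun y : ℝ => y ^ (1 - q)) ((1 - q) * y ^ (1 - q - 1)) y := by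
    intro y hy
    exact Real.hasDerivAt_rpow_const (Or.inl (ne_of_gt (lt_trans hn0 hy.1)))
  obtain ⟨c, hc, hceq⟩ := exists_hasDerivAt_eq_slope (fun y : ℝ => y ^ (1 - q))
    (fun y => (1 - q) * y ^ (1 - q - 1)) hab hcont hderiv
  have hc0 : (0 : ℝ) < c := lt_trans hn0 hc.1
  have hsimp : (1 - q) * c ^ (1 - q - 1) = ((n : ℝ) + 1) ^ (1 - q) - (n : ℝ) ^ (1 - q) := by
    rw [hceq]; ring_nf
  have hexp : (1 : ℝ) - q - 1 = -q := by ring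
  rw [hexp] at hsimp
  have hkey : (n : ℝ) ^ (1 - q) - ((n : ℝ) + 1) ^ (1 - q) = (q - 1) * c ^ (-q) := by
    have := hsimp
    nlinarith [this]
  rw [hkey]
  rw [le_div_iff₀ (by linarith : (0:ℝ) < q - 1)]
  rw [mul_comm]
  apply mul_le_mul_of_nonneg_left _ (by linarith : (0:ℝ) ≤ q - 1)
  exact Real.rpow_le_rpow_of_nonpos hc0 hc.2.le (by linarith)

lemma tail_sum_le {q : ℝ} (hq : 1 < q) (K : ℕ) (hK : 1 ≤ K) (N : ℕ) :
    ∑ n ∈ Finset.Ico (K + 1) N, ((n : ℝ)) ^ (-q) ≤ (K : ℝ) ^ (1 - q) / (q - 1) := by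
  have hK0 : (0:ℝ) < K := by exact_mod_cast hK
  have key : ∀ m : ℕ, ∑ n ∈ Finset.Ico (K + 1) (m + K + 1), ((n : ℝ)) ^ (-q)
      ≤ ((K : ℝ) ^ (1 - q) - (((m + K : ℕ) : ℝ)) ^ (1 - q)) / (q - 1) := by
    intro m
    induction m with
    | zero => simp
    | succ m ih =>
      have hle : K + 1 ≤ m + K + 1 := by omega
      have : m + 1 + K + 1 = (m + K + 1) + 1 := by omega
      rw [this, Finset.sum_Ico_succ_top hle]
      have hmvt := mvt_step hq (m + K) (by omega)
      have hcast : ((m + K + 1 : ℕ) : ℝ) = ((m + K : ℕ) : ℝ) + 1 := by push_cast; ring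
      have hcast2 : ((m + 1 + K : ℕ) : ℝ) = ((m + K : ℕ) : ℝ) + 1 := by push_cast; ring
      rw [hcast, hcast2]
      have := add_le_add ih hmvt
      calc ∑ n ∈ Finset.Ico (K + 1) (m + K + 1), ((n : ℝ)) ^ (-q) + (((m + K : ℕ) : ℝ) + 1) ^ (-q)
          ≤ ((K : ℝ) ^ (1 - q) - (((m + K : ℕ) : ℝ)) ^ (1 - q)) / (q - 1)
            + ((((m + K : ℕ) : ℝ)) ^ (1 - q) - ((((m + K : ℕ) : ℝ)) + 1) ^ (1 - q)) / (q - 1) := this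
        _ = ((K : ℝ) ^ (1 - q) - ((((m + K : ℕ) : ℝ)) + 1) ^ (1 - q)) / (q - 1) := by ring
  rcases le_or_gt N (K + 1) with hN | hN
  · have : Finset.Ico (K + 1) N = ∅ := Finset.Ico_eq_empty (by omega)
    rw [this]
    simp only [Finset.sum_empty]
    exact div_nonneg (Real.rpow_nonneg hK0.le _) (by linarith)
  · have hNK : N ≤ (N - K - 1) + K + 1 := by omega
    calc ∑ n ∈ Finset.Ico (K + 1) N, ((n : ℝ)) ^ (-q)
        ≤ ∑ n ∈ Finset.Ico (K + 1) ((N - K - 1) + K + 1), ((n : ℝ)) ^ (-q) := by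
          apply Finset.sum_le_sum_of_subset_of_nonneg
          · apply Finset.Ico_subset_Ico le_rfl hNK
          · intro n _ _
            exact Real.rpow_nonneg (Nat.cast_nonneg n) _
      _ ≤ ((K : ℝ) ^ (1 - q) - (((N - K - 1) + K : ℕ) : ℝ) ^ (1 - q)) / (q - 1) := key _
      _ ≤ (K : ℝ) ^ (1 - q) / (q - 1) := by
          have ht : (0:ℝ) ≤ (((N - K - 1) + K : ℕ) : ℝ) ^ (1 - q) :=
            Real.rpow_nonneg (Nat.cast_nonneg _) _
          exact (div_le_div_iff_of_pos_right (by linarith : (0:ℝ) < q - 1)).mpr (by linarith)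

set_option maxHeartbeats 400000 in
/-- Lemma 5.3: the truncation tail satisfies, for all `τ ∈ (1/α, 1)` and
`M ≥ 1`, `Σ_{h ∉ A_d(M)} 1/r_{d,α,γ}(h) ≤ C_{2,d,τ,α,γ} · M^{−(1−τ)/(ατ)}`. -/
theorem stmt8 (d : ℕ) (hd : 0 < d) (α : ℝ) (hα : 1 < α)
    (γ : Finset (Fin d) → ℝ) (hγpos : ∀ u, 0 < γ u) (hγ0 : γ ∅ = 1)
    (M : ℝ) (hM : 1 ≤ M) (τ : ℝ) (hτ1 : 1/α < τ) (hτ2 : τ < 1) :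
    ∑' h : {h : Fin d → ℤ // ¬ rK α γ h ≤ M}, 1 / rK α γ h.1 ≤
      (γ {(⟨0, hd⟩ : Fin d)} ^ ((τ-1)/(α*τ)) * (τ/(1-τ)) *
        (∑ u : Finset (Fin d), γ u ^ τ * (2 * zetaR (α*τ)) ^ u.card) ^ (1/τ)) *
        M ^ (-(1-τ)/(α*τ)) := by
  classical
  have hα0 : 0 < α := lt_trans one_pos hα
  have hτ0 : 0 < τ := lt_trans (div_pos one_pos hα0) hτ1
  have hM0 : (0:ℝ) < M := lt_of_lt_of_le one_pos hM
  have hp : 1 < α * τ := by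
    have := (div_lt_iff₀ hα0).mp hτ1
    nlinarith
  set q : ℝ := 1 / τ with hqdef
  have hq : 1 < q := (one_lt_div hτ0).mpr hτ2
  set S : ℝ := ∑ u : Finset (Fin d), γ u ^ τ * (2 * zetaR (α * τ)) ^ u.card with hSdef
  have hSterm : ∀ u : Finset (Fin d), 0 ≤ γ u ^ τ * (2 * zetaR (α * τ)) ^ u.card := by
    intro u
    apply mul_nonneg (Real.rpow_nonneg (hγpos u).le _)
    apply pow_nonneg
    linarith [zetaR_nonneg (α * τ)]
  have hS0 : (0:ℝ) < S := by
    have h1 : (0:ℝ) < γ (∅ : Finset (Fin d)) ^ τ * (2 * zetaR (α * τ)) ^ (∅ : Finset (Fin d)).card := by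
      simp [hγ0]
    calc (0:ℝ) < γ (∅ : Finset (Fin d)) ^ τ * (2 * zetaR (α * τ)) ^ (∅ : Finset (Fin d)).card := h1
      _ ≤ S := Finset.single_le_sum (fun u _ => hSterm u) (Finset.mem_univ ∅)
  set i0 : Fin d := ⟨0, hd⟩ with hi0
  have hγ1 : 0 < γ {i0} := hγpos _
  set x : ℝ := (γ {i0} * M) ^ α⁻¹ with hxdef
  have hx0 : 0 < x := Real.rpow_pos_of_pos (by positivity) _
  set K : ℕ := ⌊x⌋₊ + 1 with hKdef
  have hKx : x ≤ (K : ℝ) := by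
    rw [hKdef]
    push_cast
    exact (Nat.lt_floor_add_one x).le
  have hK1 : 1 ≤ K := Nat.le_add_left 1 _
  have hK0 : (0:ℝ) < K := lt_of_lt_of_le hx0 hKx
  obtain ⟨e, he⟩ := Countable.exists_injective_nat (Fin d → ℤ)
  set B : (Fin d → ℤ) → Set (Fin d → ℤ) := fun h =>
    {h' | rK α γ h' < rK α γ h ∨ (rK α γ h' = rK α γ h ∧ e h' ≤ e h)} with hBdef
  have hBfin : ∀ h, (B h).Finite := by
    intro h
    apply (finite_le hα0 γ hγpos (rK α γ h)).subset
    intro h' hh'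
    rcases hh' with h1 | h1
    · exact le_of_lt h1
    · exact le_of_eq h1.1
  set k : (Fin d → ℤ) → ℕ := fun h => (B h).ncard with hkdef
  -- upper bound for k
  have hkub : ∀ h : Fin d → ℤ, (k h : ℝ) ≤ (rK α γ h) ^ τ * S := by
    intro h
    have hfin := hBfin h
    have hcard : k h = hfin.toFinset.card := Set.ncard_eq_toFinset_card _ hfin
    rw [hcard]
    apply card_markov hα0 hτ0 hp γ hγpos (rK_pos α γ hγpos h).le
    intro h' hh'
    rw [Set.Finite.mem_toFinset] at hh'
    rcases hh' with h1 | h1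
    · exact le_of_lt h1
    · exact le_of_eq h1.1
  -- axis vectors: lower bound for k on the tail
  set axisv : ℕ → (Fin d → ℤ) := fun m => fun j => if j = i0 then (m : ℤ) else 0 with haxisdef
  have haxis_inj : Function.Injective axisv := by
    intro m m' hmm
    have := congrFun hmm i0
    simpa [haxisdef] using this
  have haxis_le : ∀ m : ℕ, (m:ℝ) ≤ x → rK α γ (axisv m) ≤ M := by
    intro m hm
    rcases Nat.eq_zero_or_pos m with rfl | hm0
    · have hsupp : supp (axisv 0) = ∅ := by
        ext j
        simp [supp, haxisdef]
      have h1 : rK α γ (axisv 0) = 1 := by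
        rw [rK, rp, hsupp, hγ0]
        simp
      rw [h1]; exact hM
    · have hsupp : supp (axisv m) = {i0} := by
        ext j
        simp only [supp, Finset.mem_filter, Finset.mem_univ, true_and, Finset.mem_singleton,
          haxisdef]
        by_cases hji : j = i0
        · simp only [hji, if_pos rfl, iff_true]
          exact_mod_cast hm0.ne'
        · simp [hji]
      have hax : axisv m i0 = (m : ℤ) := by simp [haxisdef]
      have hrp : rp α (axisv m) = ((m:ℕ):ℝ) ^ α := by
        rw [rp, hsupp, Finset.prod_singleton, hax]
        rw [abs_of_nonneg (by positivity : (0:ℝ) ≤ ((m:ℤ):ℝ))]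
        norm_num
      rw [rK, hsupp, hrp, div_le_iff₀ hγ1]
      have h2 : ((m:ℕ):ℝ) ^ α ≤ x ^ α := Real.rpow_le_rpow (Nat.cast_nonneg m) hm hα0.le
      have h3 : x ^ α = γ {i0} * M := by
        rw [hxdef, ← Real.rpow_mul (by positivity), inv_mul_cancel₀ hα0.ne', Real.rpow_one]
      calc ((m:ℕ):ℝ) ^ α ≤ x ^ α := h2
        _ = γ {i0} * M := h3
        _ = M * γ {i0} := by ring
  have hklb : ∀ h : Fin d → ℤ, M < rK α γ h → K + 1 ≤ k h := by
    intro h hMh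
    set T : Finset (Fin d → ℤ) := insert h ((Finset.range K).image axisv) with hT
    have hax_mem : ∀ m ∈ Finset.range K, rK α γ (axisv m) ≤ M := by
      intro m hm
      apply haxis_le
      have hmK : m ≤ ⌊x⌋₊ := by
        have := Finset.mem_range.mp hm
        omega
      calc (m:ℝ) ≤ (⌊x⌋₊ : ℝ) := by exact_mod_cast hmK
        _ ≤ x := Nat.floor_le hx0.le
    have hTsub : ↑T ⊆ B h := by
      intro h' hh'
      simp only [hT, Finset.coe_insert, Set.mem_insert_iff, Finset.coe_image,
        Set.mem_image, Finset.mem_coe] at hh'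
      rcases hh' with rfl | ⟨m, hm, rfl⟩
      · exact Or.inr ⟨rfl, le_refl _⟩
      · exact Or.inl (lt_of_le_of_lt (hax_mem m hm) hMh)
    have hTcard : T.card = K + 1 := by
      rw [hT, Finset.card_insert_of_notMem, Finset.card_image_of_injective _ haxis_inj,
        Finset.card_range]
      intro hmem
      rcases Finset.mem_image.mp hmem with ⟨m, hm, heq⟩
      rw [← heq] at hMh
      exact absurd hMh (not_lt.mpr (hax_mem m hm))
    calc K + 1 = T.card := hTcard.symm
      _ = (↑T : Set (Fin d → ℤ)).ncard := (Set.ncard_coe_finset T).symm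
      _ ≤ (B h).ncard := Set.ncard_le_ncard hTsub (hBfin h)
  -- strict monotonicity of k
  have hmono : ∀ h h' : Fin d → ℤ,
      (rK α γ h < rK α γ h' ∨ (rK α γ h = rK α γ h' ∧ e h < e h')) → k h < k h' := by
    intro h h' hlt
    have hsub : B h ⊆ B h' := by
      intro z hz
      rcases hlt with h1 | ⟨h1, h2⟩
      · rcases hz with hz | hz
        · exact Or.inl (lt_trans hz h1)
        · exact Or.inl (lt_of_eq_of_lt hz.1 h1)
      · rcases hz with hz | hz
        · exact Or.inl (lt_of_lt_of_eq hz h1)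
        · exact Or.inr ⟨hz.1.trans h1, le_trans hz.2 (le_of_lt h2)⟩
    have hmem : h' ∈ B h' := Or.inr ⟨rfl, le_refl _⟩
    have hnot : h' ∉ B h := by
      intro hcon
      rcases hlt with h1 | ⟨h1, h2⟩
      · rcases hcon with hc | hc
        · exact absurd (lt_trans hc h1) (lt_irrefl _)
        · rw [hc.1] at h1
          exact lt_irrefl _ h1
      · rcases hcon with hc | hc
        · rw [h1] at hc
          exact lt_irrefl _ hc
        · exact absurd h2 (not_lt.mpr hc.2)
    exact Set.ncard_lt_ncard ((Set.ssubset_iff_of_subset hsub).mpr ⟨h', hmem, hnot⟩) (hBfin h')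
  have hinj : Function.Injective (fun b : {h : Fin d → ℤ // ¬ rK α γ h ≤ M} => k b.1) := by
    intro b b' heq
    simp only at heq
    by_contra hne
    have hne' : b.1 ≠ b'.1 := fun hh => hne (Subtype.ext hh)
    rcases lt_trichotomy (rK α γ b.1) (rK α γ b'.1) with h1 | h1 | h1
    · exact absurd heq (ne_of_lt (hmono _ _ (Or.inl h1)))
    · rcases lt_trichotomy (e b.1) (e b'.1) with h2 | h2 | h2
      · exact absurd heq (ne_of_lt (hmono _ _ (Or.inr ⟨h1, h2⟩)))
      · exact hne' (he h2)
      · exact absurd heq.symm (ne_of_lt (hmono _ _ (Or.inr ⟨h1.symm, h2⟩)))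
    · exact absurd heq.symm (ne_of_lt (hmono _ _ (Or.inl h1)))
  set g : ℕ → ℝ := fun n => if K + 1 ≤ n then S ^ q * (n : ℝ) ^ (-q) else 0 with hgdef
  have hg0 : ∀ n, 0 ≤ g n := by
    intro n
    rw [hgdef]
    dsimp only
    split
    · exact mul_nonneg (Real.rpow_nonneg hS0.le _) (Real.rpow_nonneg (Nat.cast_nonneg n) _)
    · exact le_refl 0
  have hgsum : Summable g := by
    apply Summable.of_nonneg_of_le hg0 ?_ ((summable_nat_neg q hq).mul_left (S ^ q))
    intro n
    rw [hgdef]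
    dsimp only
    split
    · exact le_refl _
    · exact mul_nonneg (Real.rpow_nonneg hS0.le _) (Real.rpow_nonneg (Nat.cast_nonneg n) _)
  have hτq : τ * q = 1 := by
    rw [hqdef]
    field_simp
  have hfg : ∀ b : {h : Fin d → ℤ // ¬ rK α γ h ≤ M}, 1 / rK α γ b.1 ≤ g (k b.1) := by
    intro b
    have hMb : M < rK α γ b.1 := not_le.mp b.2
    have hr0 : 0 < rK α γ b.1 := rK_pos α γ hγpos b.1
    have hkK : K + 1 ≤ k b.1 := hklb b.1 hMb
    have hk0 : (0:ℝ) < (k b.1 : ℝ) := by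
      have : (0:ℕ) < k b.1 := by omega
      exact_mod_cast this
    rw [hgdef]
    dsimp only
    rw [if_pos hkK]
    have h1 : (k b.1 : ℝ) ≤ (rK α γ b.1) ^ τ * S := hkub b.1
    have h2 : ((rK α γ b.1) ^ τ * S) ^ (-q) ≤ (k b.1 : ℝ) ^ (-q) :=
      Real.rpow_le_rpow_of_nonpos hk0 h1 (by linarith)
    have h3 : ((rK α γ b.1) ^ τ * S) ^ (-q) = (rK α γ b.1)⁻¹ * S ^ (-q) := by
      rw [Real.mul_rpow (Real.rpow_nonneg hr0.le _) hS0.le,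
        ← Real.rpow_mul hr0.le, mul_neg, hτq, Real.rpow_neg_one]
    calc 1 / rK α γ b.1 = (rK α γ b.1)⁻¹ := one_div _
      _ = (rK α γ b.1)⁻¹ * (S ^ (-q) * S ^ q) := by
          rw [← Real.rpow_add hS0, neg_add_cancel, Real.rpow_zero, mul_one]
      _ = S ^ q * (((rK α γ b.1) ^ τ * S) ^ (-q)) := by
          rw [h3]; ring
      _ ≤ S ^ q * ((k b.1 : ℝ) ^ (-q)) :=
          mul_le_mul_of_nonneg_left h2 (Real.rpow_nonneg hS0.le _)
  have hcomp : Summable (fun b : {h : Fin d → ℤ // ¬ rK α γ h ≤ M} => g (k b.1)) :=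
    hgsum.comp_injective hinj
  have hfsum : Summable (fun b : {h : Fin d → ℤ // ¬ rK α γ h ≤ M} => 1 / rK α γ b.1) :=
    Summable.of_nonneg_of_le (fun b => (one_div_pos.mpr (rK_pos α γ hγpos b.1)).le) hfg hcomp
  have hmain : (∑' b : {h : Fin d → ℤ // ¬ rK α γ h ≤ M}, 1 / rK α γ b.1) ≤ ∑' n, g n :=
    hfsum.tsum_le_tsum_of_inj (fun b => k b.1) hinj (fun c _ => hg0 c) hfg hgsum
  have htail : (∑' n, g n) ≤ S ^ q * ((K:ℝ) ^ (1 - q) / (q - 1)) := by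
    apply Real.tsum_le_of_sum_range_le hg0
    intro N
    have hIco : (Finset.range N).filter (fun n => K + 1 ≤ n) = Finset.Ico (K+1) N := by
      ext n
      simp [Finset.mem_filter, Finset.mem_range, Finset.mem_Ico, and_comm]
    calc ∑ n ∈ Finset.range N, g n
        = ∑ n ∈ (Finset.range N).filter (fun n => K + 1 ≤ n), S ^ q * (n:ℝ) ^ (-q) :=
          (Finset.sum_filter _ _).symm
      _ = ∑ n ∈ Finset.Ico (K+1) N, S ^ q * (n:ℝ) ^ (-q) := by rw [hIco]
      _ = S ^ q * ∑ n ∈ Finset.Ico (K+1) N, (n:ℝ) ^ (-q) := by rw [Finset.mul_sum]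
      _ ≤ S ^ q * ((K:ℝ) ^ (1 - q) / (q - 1)) :=
          mul_le_mul_of_nonneg_left (tail_sum_le hq K hK1 N) (Real.rpow_nonneg hS0.le _)
  -- final arithmetic
  have hKle : (K:ℝ) ^ (1-q) ≤ γ {i0} ^ ((τ-1)/(α*τ)) * M ^ (-(1-τ)/(α*τ)) := by
    have h1 : (K:ℝ) ^ (1-q) ≤ x ^ (1-q) :=
      Real.rpow_le_rpow_of_nonpos hx0 hKx (by linarith)
    have h2 : x ^ (1-q) = (γ {i0} * M) ^ (α⁻¹ * (1-q)) := by
      rw [hxdef, ← Real.rpow_mul (by positivity)]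
    have h3 : (γ {i0} * M) ^ (α⁻¹ * (1-q)) = γ {i0} ^ (α⁻¹ * (1-q)) * M ^ (α⁻¹ * (1-q)) :=
      Real.mul_rpow hγ1.le hM0.le
    have he1 : γ {i0} ^ (α⁻¹ * (1-q)) = γ {i0} ^ ((τ-1)/(α*τ)) := by
      congr 1
      rw [hqdef]
      field_simp
      try ring
    have he2 : M ^ (α⁻¹ * (1-q)) = M ^ (-(1-τ)/(α*τ)) := by
      congr 1
      rw [hqdef]
      field_simp
      try ring
    calc (K:ℝ) ^ (1-q) ≤ x ^ (1-q) := h1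
      _ = γ {i0} ^ (α⁻¹ * (1-q)) * M ^ (α⁻¹ * (1-q)) := by rw [h2, h3]
      _ = γ {i0} ^ ((τ-1)/(α*τ)) * M ^ (-(1-τ)/(α*τ)) := by rw [he1, he2]
  have hq1 : (q - 1)⁻¹ = τ/(1-τ) := by
    rw [hqdef]
    rw [show (1:ℝ)/τ - 1 = (1-τ)/τ by field_simp]
    rw [inv_div]
  have hfinal : S ^ q * ((K:ℝ) ^ (1 - q) / (q - 1))
      ≤ (γ {i0} ^ ((τ-1)/(α*τ)) * (τ/(1-τ)) * S ^ q) * M ^ (-(1-τ)/(α*τ)) := by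
    rw [div_eq_mul_inv, hq1]
    have hτ1τ : (0:ℝ) ≤ τ/(1-τ) := div_nonneg hτ0.le (by linarith)
    calc S ^ q * ((K:ℝ) ^ (1-q) * (τ/(1-τ)))
        ≤ S ^ q * ((γ {i0} ^ ((τ-1)/(α*τ)) * M ^ (-(1-τ)/(α*τ))) * (τ/(1-τ))) := by
          apply mul_le_mul_of_nonneg_left _ (Real.rpow_nonneg hS0.le _)
          exact mul_le_mul_of_nonneg_right hKle hτ1τ
      _ = (γ {i0} ^ ((τ-1)/(α*τ)) * (τ/(1-τ)) * S ^ q) * M ^ (-(1-τ)/(α*τ)) := by ring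
  exact le_trans hmain (le_trans htail hfinal)

end
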